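/- arXiv:2205.14475 — 2 statements merged into one kernel-verified Lean document; each statement's English description precedes it below -/
import Mathlib

section
/- Under the rate models of the previous two statements (R^DL_stt(φ) = log₂(1+(M−K)φ), R^DL_sps(φ) = log₂(1+(M−N−K)φ), R^UL_stt(φ) = log₂(1+γ_stt(φ)), R^UL_sps(φ) = log₂(1+γ_sps(φ)) with γ_stt ≤ γ_sps and M > N+K), for any φ > 0: R^DL_stt(φ) − R^UL_stt(φ) ≥ R^DL_sps(φ) − R^UL_sps(φ). -/
/-- The downlink-minus-uplink rate gap is larger for SI subtraction than for
spatial suppression at the same transmit power: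
`R^DL_stt(φ) − R^UL_stt(φ) ≥ R^DL_sps(φ) − R^UL_sps(φ)`. -/
theorem stmt_13 (M N K : ℕ) (hM : N + K < M) (hK : 1 ≤ K) (hN : 1 ≤ N)
    (S I ω ωΔ : ℝ) (hS : 0 < S) (hI : 0 < I) (hωΔ : 0 ≤ ωΔ) (hω : ωΔ ≤ ω)
    (γstt γsps : ℝ → ℝ)
    (hstt : ∀ φ, γstt φ = S / (I + ω * φ))
    (hsps : ∀ φ, γsps φ = S / (I + (ω - ωΔ) * φ)) :
    ∀ φ : ℝ, 0 < φ →
      Real.logb 2 (1 + ((M : ℝ) - N - K) * φ) - Real.logb 2 (1 + γsps φ)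
        ≤ Real.logb 2 (1 + ((M : ℝ) - K) * φ) - Real.logb 2 (1 + γstt φ) := by
  intro φ hφ
  have hMNK : (0:ℝ) < (M : ℝ) - N - K := by
    have : (N:ℝ) + K < M := by exact_mod_cast hM
    linarith
  have hd2 : (0:ℝ) < I + (ω - ωΔ) * φ := by nlinarith
  have hd1 : (0:ℝ) < I + ω * φ := by nlinarith
  have hγ : γstt φ ≤ γsps φ := by
    rw [hstt, hsps]
    apply div_le_div_of_nonneg_left hS.le hd2
    nlinarith
  have hγpos : 0 < γstt φ := by rw [hstt]; positivity
  have h1 : Real.logb 2 (1 + ((M : ℝ) - N - K) * φ)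
      ≤ Real.logb 2 (1 + ((M : ℝ) - K) * φ) := by
    gcongr
    · nlinarith
    · nlinarith
  have h2 : Real.logb 2 (1 + γstt φ) ≤ Real.logb 2 (1 + γsps φ) := by
    gcongr
    linarith
  linarith
end

section
/- With φ_stt = ((M−K−N)/(M−K)) φ_sps as above, S, I > 0, 0 ≤ ω_Δ ≤ ω, let γ_stt(φ) = S/(I + ωφ) and γ_sps(φ) = S/(I + (ω−ω_Δ)φ). Then γ_sps(φ_sps) ≥ γ_stt(φ_stt) if and only if ω_Δ ≥ (N/(M−K)) ω. -/
/-! Both SINRs have the same signal power `S` and positive denominators, so the comparison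
reduces to comparing the residual SI terms `(ω − ω_Δ) φ_sps` and `ω φ_stt`; after substituting
the scaling law and cancelling `φ_sps`, this is the linear condition `ω − ω_Δ ≤ ω − (N/(M−K)) ω`. -/

lemma sub_mul_le_mul_div_mul_iff {c n ω ωΔ φ : ℝ} (hc : 0 < c) (hφ : 0 < φ) :
    (ω - ωΔ) * φ ≤ ω * ((c - n) / c * φ) ↔ n / c * ω ≤ ωΔ := by
  have hrhs : ω * ((c - n) / c * φ) = (ω - n / c * ω) * φ := by field_simp
  rw [hrhs, mul_le_mul_iff_left₀ hφ, sub_le_sub_iff_left]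

theorem stmt_15_general (M N K : ℕ) (hM : N + K < M)
    (S I ω ωΔ : ℝ) (hS : 0 < S) (hI : 0 < I) (hωΔ : 0 ≤ ωΔ) (hω : ωΔ ≤ ω)
    (γstt γsps : ℝ → ℝ)
    (hstt : ∀ φ, γstt φ = S / (I + ω * φ))
    (hsps : ∀ φ, γsps φ = S / (I + (ω - ωΔ) * φ))
    (φstt φsps : ℝ) (hφsps : 0 < φsps)
    (hscale : φstt = (((M : ℝ) - K - N) / ((M : ℝ) - K)) * φsps) :
    γstt φstt ≤ γsps φsps ↔ ((N : ℝ) / ((M : ℝ) - K)) * ω ≤ ωΔ := by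
  have hNKM : (N : ℝ) + K < M := by exact_mod_cast hM
  have hMK : (0 : ℝ) < (M : ℝ) - K := by linarith [N.cast_nonneg (α := ℝ)]
  have hφstt : 0 ≤ φstt := by
    rw [hscale]
    exact mul_nonneg (div_nonneg (by linarith) hMK.le) hφsps.le
  have hstt_pos : 0 < I + ω * φstt :=
    add_pos_of_pos_of_nonneg hI (mul_nonneg (hωΔ.trans hω) hφstt)
  have hsps_pos : 0 < I + (ω - ωΔ) * φsps :=
    add_pos_of_pos_of_nonneg hI (mul_nonneg (sub_nonneg.2 hω) hφsps.le)
  rw [hstt, hsps, div_le_div_iff_of_pos_left hS hstt_pos hsps_pos, add_le_add_iff_left, hscale]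
  exact sub_mul_le_mul_div_mul_iff hMK hφsps

/-- Cross-point condition (`R^UL_cross ≥ 1`): under the downlink power scaling
law `φ_stt = ((M−K−N)/(M−K)) φ_sps`, spatial suppression yields higher uplink
SINR than SI subtraction iff `ω_Δ ≥ (N/(M−K)) ω`. -/
theorem stmt_15 (M N K : ℕ) (hM : N + K < M) (hK : 1 ≤ K) (hN : 1 ≤ N)
    (S I ω ωΔ : ℝ) (hS : 0 < S) (hI : 0 < I) (hωΔ : 0 ≤ ωΔ) (hω : ωΔ ≤ ω)
    (γstt γsps : ℝ → ℝ)
    (hstt : ∀ φ, γstt φ = S / (I + ω * φ))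
    (hsps : ∀ φ, γsps φ = S / (I + (ω - ωΔ) * φ))
    (φstt φsps : ℝ) (hφsps : 0 < φsps)
    (hscale : φstt = (((M : ℝ) - K - N) / ((M : ℝ) - K)) * φsps) :
    γstt φstt ≤ γsps φsps ↔ ((N : ℝ) / ((M : ℝ) - K)) * ω ≤ ωΔ :=
  stmt_15_general M N K hM S I ω ωΔ hS hI hωΔ hω γstt γsps hstt hsps φstt φsps hφsps hscale
end
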